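/- arXiv:2502.12026 — 8 statements merged into one kernel-verified Lean document; each statement's English description precedes it below -/
import Mathlib

section
/- Let M ≥ 2, and for builder i let f̄ᵢ > 0, v̄ᵢ > 0 with f̄ᵢ ≥ v̄ᵢ. Define the payoff πᵢ(hᵢ) = f̄ᵢ·hᵢ/H + v̄ᵢ·(hᵢ/H)² − hᵢ²/H where H = hᵢ + H₋ᵢ and H₋ᵢ > 0 is fixed. Then the second derivative of πᵢ with respect to hᵢ is strictly negative for all hᵢ > 0, i.e., πᵢ is strictly concave on (0,∞). -/
open Set

/-- The builder's payoff is strictly concave on (0,∞): its second derivative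
is strictly negative for all hᵢ > 0. -/
theorem stmt_0 (M : ℕ) (hM : 2 ≤ M) (f v Hmi : ℝ)
    (hf : 0 < f) (hv : 0 < v) (hfv : v ≤ f) (hHmi : 0 < Hmi) :
    (∀ h : ℝ, 0 < h →
      iteratedDeriv 2
        (fun h : ℝ => f * h / (h + Hmi) + v * (h / (h + Hmi)) ^ 2 - h ^ 2 / (h + Hmi)) h < 0) ∧
    StrictConcaveOn ℝ (Ioi (0 : ℝ))
      (fun h : ℝ => f * h / (h + Hmi) + v * (h / (h + Hmi)) ^ 2 - h ^ 2 / (h + Hmi)) := by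
  set a := Hmi with ha
  set g : ℝ → ℝ := fun h : ℝ => f * h / (h + a) + v * (h / (h + a)) ^ 2 - h ^ 2 / (h + a)
    with hg
  set d1 : ℝ → ℝ := fun h : ℝ =>
      f * a / (h + a) ^ 2 + 2 * v * h * a / (h + a) ^ 3 - (h ^ 2 + 2 * h * a) / (h + a) ^ 2
    with hd1def
  set d2 : ℝ → ℝ := fun h : ℝ =>
      -2 * a * (f * (h + a) + a * (h + a) - v * a + 2 * v * h) / (h + a) ^ 4 with hd2def
  have hgd : ∀ h : ℝ, 0 < h → HasDerivAt g (d1 h) h := by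
    intro h hh
    have hne : h + a ≠ 0 := by positivity
    have h1 : HasDerivAt (fun h : ℝ => h + a) 1 h := (hasDerivAt_id h).add_const a
    have h2 : HasDerivAt (fun h : ℝ => f * h) f h := by
      simpa using (hasDerivAt_id h).const_mul f
    have hx2 : HasDerivAt (fun h : ℝ => h ^ 2) (2 * h) h := by
      simpa using hasDerivAt_pow 2 h
    have t1 := h2.div h1 hne
    have inner := (hasDerivAt_id h).div h1 hne
    have t2 := (inner.pow 2).const_mul v
    have t3 := hx2.div h1 hne
    have := (t1.add t2).sub t3
    refine HasDerivAt.congr_deriv this ?_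
    simp only [hd1def, Pi.div_apply, id, Nat.cast_ofNat, Nat.reduceSub, pow_one]
    field_simp
    ring
  have hd1d : ∀ h : ℝ, 0 < h → HasDerivAt d1 (d2 h) h := by
    intro h hh
    have hne : h + a ≠ 0 := by positivity
    have h1 : HasDerivAt (fun h : ℝ => h + a) 1 h := (hasDerivAt_id h).add_const a
    have hp2 : HasDerivAt (fun h : ℝ => (h + a) ^ 2) (2 * (h + a) ^ 1 * 1) h := h1.pow 2
    have hp3 : HasDerivAt (fun h : ℝ => (h + a) ^ 3) (3 * (h + a) ^ 2 * 1) h := h1.pow 3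
    have t1 := (hasDerivAt_const h (f * a)).div hp2 (pow_ne_zero 2 hne)
    have hn2 : HasDerivAt (fun h : ℝ => 2 * v * h * a) (2 * v * 1 * a) h :=
      ((hasDerivAt_id h).const_mul (2 * v)).mul_const a
    have t2 := hn2.div hp3 (pow_ne_zero 3 hne)
    have hx2 : HasDerivAt (fun h : ℝ => h ^ 2) (2 * h) h := by
      simpa using hasDerivAt_pow 2 h
    have hn3 : HasDerivAt (fun h : ℝ => h ^ 2 + 2 * h * a) (2 * h + 2 * 1 * a) h :=
      hx2.add (((hasDerivAt_id h).const_mul 2).mul_const a)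
    have t3 := hn3.div hp2 (pow_ne_zero 2 hne)
    have := (t1.add t2).sub t3
    refine HasDerivAt.congr_deriv this ?_
    simp only [hd2def]
    field_simp
    ring
  have hderiv_g : ∀ h ∈ Ioi (0:ℝ), deriv g h = d1 h := fun h hh => (hgd h hh).deriv
  have key : ∀ h : ℝ, 0 < h → deriv (deriv g) h = d2 h := by
    intro h hh
    have hev : deriv g =ᶠ[nhds h] d1 :=
      Filter.eventuallyEq_of_mem (isOpen_Ioi.mem_nhds hh) hderiv_g
    rw [hev.deriv_eq]
    exact (hd1d h hh).deriv
  have hneg : ∀ h : ℝ, 0 < h → d2 h < 0 := by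
    intro h hh
    have hnum : -2 * a * (f * (h + a) + a * (h + a) - v * a + 2 * v * h) < 0 := by
      nlinarith [mul_nonneg (sub_nonneg.mpr hfv) (add_pos hh hHmi).le, mul_pos hv hh, mul_pos hHmi (add_pos hh hHmi)]
    have hden : (0:ℝ) < (h + a) ^ 4 := by positivity
    exact div_neg_of_neg_of_pos hnum hden
  constructor
  · intro h hh
    have : iteratedDeriv 2 g h = deriv (deriv g) h := by
      rw [iteratedDeriv_succ, iteratedDeriv_one]
    rw [this, key h hh]
    exact hneg h hh
  · apply strictConcaveOn_of_deriv2_neg (convex_Ioi 0)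
    · intro x hx
      exact ((hgd x hx).differentiableAt.continuousAt).continuousWithinAt
    · intro x hx
      rw [interior_Ioi] at hx
      have : deriv^[2] g x = deriv (deriv g) x := by
        simp [Function.iterate_succ, Function.iterate_zero, Function.comp]
      rw [this, key x hx]
      exact hneg x hx
end

section
/- Let f̄₁, f̄₂, v̄₁, v̄₂ > 0 with f̄₁ ≥ v̄₁ and f̄₂ ≥ v̄₂. Consider the quartic P(λ) = f̄₁λ⁴ + (3f̄₁ + 2v̄₁)λ³ + (2f̄₁ − 2f̄₂ + 4v̄₁ − 4v̄₂)λ² − (3f̄₂ + 2v̄₂)λ − f̄₂. Then P has exactly one positive real root. -/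
/-!
Only the signs of the coefficients matter: they are `+, +, ?, -, -`. For such a quartic
`a x⁴ + b x³ + c x² - d x - e`, the quotient `a x² + b x + c - d / x - e / x²` is strictly
increasing on `(0, ∞)`, so there is at most one positive root; one exists by the intermediate
value theorem, since the value at `0` is `-e < 0` and the leading coefficient is positive.
-/

def quartic (a b c d e x : ℝ) : ℝ := a * x ^ 4 + b * x ^ 3 + c * x ^ 2 - d * x - e

section

variable {a b c d e : ℝ}

theorem continuous_quartic : Continuous (quartic a b c d e) := by
  unfold quartic
  fun_prop

theorem sq_mul_quartic_lt (ha : 0 ≤ a) (hb : 0 ≤ b) (hd : 0 ≤ d) (he : 0 < e) {x y : ℝ}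
    (hx : 0 < x) (hxy : x < y) : y ^ 2 * quartic a b c d e x < x ^ 2 * quartic a b c d e y := by
  have hy : 0 < y := hx.trans hxy
  have key : x ^ 2 * quartic a b c d e y - y ^ 2 * quartic a b c d e x
      = (y - x) * (a * x ^ 2 * y ^ 2 * (x + y) + b * x ^ 2 * y ^ 2 + d * (x * y) + e * (x + y)) := by
    unfold quartic
    ring
  have : 0 < (y - x) * (a * x ^ 2 * y ^ 2 * (x + y) + b * x ^ 2 * y ^ 2 + d * (x * y) + e * (x + y)) :=
    mul_pos (sub_pos.2 hxy) (by positivity)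
  linarith

theorem quartic_nonneg_of_le (ha : 0 < a) {x : ℝ}
    (hx : 1 + (|b| + |c| + |d| + |e|) / a ≤ x) : 0 ≤ quartic a b c d e x := by
  have hK : |b| + |c| + |d| + |e| ≤ a * x := by
    rw [← div_le_iff₀' ha]
    linarith
  have h1 : 1 ≤ x := le_trans (le_add_of_nonneg_right (by positivity)) hx
  have hx2 : x ≤ x ^ 2 := by nlinarith
  have hx3 : x ^ 2 ≤ x ^ 3 := by nlinarith
  have hlead : (|b| + |c| + |d| + |e|) * x ^ 3 ≤ a * x ^ 4 := by
    have := mul_le_mul_of_nonneg_right hK (by positivity : (0 : ℝ) ≤ x ^ 3)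
    linarith [show a * x * x ^ 3 = a * x ^ 4 by ring]
  have hb : -(|b| * x ^ 3) ≤ b * x ^ 3 := by nlinarith [neg_abs_le b]
  have hc : -(|c| * x ^ 3) ≤ c * x ^ 2 := by nlinarith [neg_abs_le c, abs_nonneg c]
  have hd : d * x ≤ |d| * x ^ 3 := by nlinarith [le_abs_self d, abs_nonneg d]
  have he : e ≤ |e| * x ^ 3 := by nlinarith [le_abs_self e, abs_nonneg e]
  unfold quartic
  linarith

theorem exists_pos_quartic_eq_zero (ha : 0 < a) (he : 0 < e) :
    ∃ x, 0 < x ∧ quartic a b c d e x = 0 := by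
  set M := 1 + (|b| + |c| + |d| + |e|) / a
  have hM : 0 ≤ M := by positivity
  have hQ0 : quartic a b c d e 0 = -e := by simp [quartic]
  obtain ⟨x, hxM, hx⟩ := intermediate_value_Icc hM continuous_quartic.continuousOn
    ⟨by linarith, quartic_nonneg_of_le ha le_rfl⟩
  refine ⟨x, lt_of_le_of_ne hxM.1 ?_, hx⟩
  rintro rfl
  linarith

theorem eq_of_quartic_eq_zero (ha : 0 ≤ a) (hb : 0 ≤ b) (hd : 0 ≤ d) (he : 0 < e) {x y : ℝ}
    (hx : 0 < x) (hy : 0 < y) (hQx : quartic a b c d e x = 0) (hQy : quartic a b c d e y = 0) :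
    x = y := by
  by_contra hne
  rcases lt_or_gt_of_ne hne with hlt | hlt
  · simpa [hQx, hQy] using sq_mul_quartic_lt (c := c) ha hb hd he hx hlt
  · simpa [hQx, hQy] using sq_mul_quartic_lt (c := c) ha hb hd he hy hlt

theorem existsUnique_pos_quartic_eq_zero (ha : 0 < a) (hb : 0 ≤ b) (hd : 0 ≤ d) (he : 0 < e) :
    ∃! x, 0 < x ∧ quartic a b c d e x = 0 := by
  obtain ⟨x, hx, hQx⟩ := exists_pos_quartic_eq_zero (b := b) (c := c) (d := d) ha he
  exact ⟨x, ⟨hx, hQx⟩, fun y ⟨hy, hQy⟩ => eq_of_quartic_eq_zero ha.le hb hd he hy hx hQy hQx⟩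

end

theorem stmt_2_general (f1 f2 v1 v2 : ℝ) (hf1 : 0 < f1) (hf2 : 0 < f2) (hv1 : 0 < v1) (hv2 : 0 < v2) :
    ∃! lam : ℝ, 0 < lam ∧
      f1 * lam ^ 4 + (3 * f1 + 2 * v1) * lam ^ 3 + (2 * f1 - 2 * f2 + 4 * v1 - 4 * v2) * lam ^ 2
        - (3 * f2 + 2 * v2) * lam - f2 = 0 :=
  existsUnique_pos_quartic_eq_zero hf1 (by positivity) (by positivity) hf2

/-- The equilibrium quartic has exactly one positive real root. -/
theorem stmt_2 (f1 f2 v1 v2 : ℝ) (hf1 : 0 < f1) (hf2 : 0 < f2) (hv1 : 0 < v1) (hv2 : 0 < v2)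
    (h1 : v1 ≤ f1) (h2 : v2 ≤ f2) :
    ∃! lam : ℝ, 0 < lam ∧
      f1 * lam ^ 4 + (3 * f1 + 2 * v1) * lam ^ 3 + (2 * f1 - 2 * f2 + 4 * v1 - 4 * v2) * lam ^ 2
        - (3 * f2 + 2 * v2) * lam - f2 = 0 :=
  stmt_2_general f1 f2 v1 v2 hf1 hf2 hv1 hv2
end

section
/- Let k₁ ∈ (0,1] and k₂ > 0 and f̄₂ > 0. Define G(k₁,k₂) = (f̄₂/k₂³)·[1 + (2k₂ + 1 + 4k₁k₂ − 2k₁)k₂ − (3 + 2k₁)k₂² − k₂³]. Then: if k₂ < 1, G(k₁,k₂) > 0; if k₂ = 1, G(k₁,k₂) = 0; if k₂ > 1, G(k₁,k₂) < 0. -/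
/-! The bracket factors as `(1 - k₂) * ((1 + k₂)² - 2 k₁ k₂)`, and for `k₁ ≤ 1` the second factor is
at least `1 + k₂² > 0`; so `G` has the sign of `1 - k₂`. -/

lemma one_add_sq_sub_two_mul_pos {k1 k2 : ℝ} (hk1 : k1 ≤ 1) (hk2 : 0 ≤ k2) :
    0 < (1 + k2) ^ 2 - 2 * k1 * k2 := by
  nlinarith [sq_nonneg k2, mul_nonneg hk2 (sub_nonneg.mpr hk1)]

lemma sign_mul_one_sub {c x : ℝ} (hc : 0 < c) :
    (x < 1 → 0 < c * (1 - x)) ∧ (x = 1 → c * (1 - x) = 0) ∧ (1 < x → c * (1 - x) < 0) :=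
  ⟨fun h => mul_pos hc (sub_pos.mpr h),
   fun h => by rw [h, sub_self, mul_zero],
   fun h => mul_neg_of_pos_of_neg hc (sub_neg.mpr h)⟩

/-- Sign of G(k₁,k₂) = P(1/k₂) according to whether k₂ <, =, > 1. -/
theorem stmt_4 (k1 k2 f2 : ℝ) (hk1 : k1 ∈ Set.Ioc (0:ℝ) 1) (hk2 : 0 < k2) (hf2 : 0 < f2) :
    let G : ℝ := (f2 / k2 ^ 3) *
      (1 + (2 * k2 + 1 + 4 * k1 * k2 - 2 * k1) * k2 - (3 + 2 * k1) * k2 ^ 2 - k2 ^ 3)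
    (k2 < 1 → 0 < G) ∧ (k2 = 1 → G = 0) ∧ (1 < k2 → G < 0) := by
  intro G
  have hG : G = f2 / k2 ^ 3 * ((1 + k2) ^ 2 - 2 * k1 * k2) * (1 - k2) := by
    simp only [G]; ring
  have hQ := one_add_sq_sub_two_mul_pos hk1.2 hk2.le
  rw [hG]
  exact sign_mul_one_sub (by positivity)
end

section
/- Suppose two builders have symmetric parameters f̄₁ = f̄₂ = f̄ > 0 and v̄₁ = v̄₂ = v̄ > 0 with f̄ ≥ v̄. Then h₁ = h₂ = (f̄ + v̄)/3 is a solution of the first-order conditions ∂πᵢ/∂hᵢ = 0 for i = 1, 2, where πᵢ(hᵢ|h₋ᵢ) = f̄·hᵢ/(h₁+h₂) + v̄·(hᵢ/(h₁+h₂))² − hᵢ²/(h₁+h₂). -/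
lemma stmt_5_aux (f v h : ℝ) (hh : 0 < h) (heq : h = (f + v) / 3) :
    deriv (fun x : ℝ => f * x / (x + h) + v * (x / (x + h)) ^ 2 - x ^ 2 / (x + h)) h = 0 := by
  have hne : h + h ≠ 0 := by positivity
  have dden : HasDerivAt (fun x : ℝ => x + h) 1 h := by
    simpa using (hasDerivAt_id h).add_const h
  have d1 : HasDerivAt (fun x : ℝ => f * x / (x + h))
      ((f * (h + h) - f * h * 1) / (h + h) ^ 2) h := by
    simpa using ((hasDerivAt_id h).const_mul f).fun_div dden hne
  have dq : HasDerivAt (fun x : ℝ => x / (x + h))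
      ((1 * (h + h) - h * 1) / (h + h) ^ 2) h := by
    simpa using (hasDerivAt_id h).fun_div dden hne
  have d2 : HasDerivAt (fun x : ℝ => v * (x / (x + h)) ^ 2)
      (v * (2 * (h / (h + h)) ^ 1 * ((1 * (h + h) - h * 1) / (h + h) ^ 2))) h := by
    simpa using ((dq.pow 2).const_mul v)
  have d3 : HasDerivAt (fun x : ℝ => x ^ 2 / (x + h))
      ((2 * h ^ 1 * (h + h) - h ^ 2 * 1) / (h + h) ^ 2) h :=
    (hasDerivAt_pow 2 h).div dden hne
  have dtot := (d1.fun_add d2).fun_sub d3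
  rw [dtot.deriv]
  have hne' : h ≠ 0 := ne_of_gt hh
  field_simp
  subst heq
  ring

/-- In the symmetric two-builder game, h₁ = h₂ = (f̄+v̄)/3 solves both
first-order conditions ∂πᵢ/∂hᵢ = 0. -/
theorem stmt_5 (f v : ℝ) (hf : 0 < f) (hv : 0 < v) (hfv : v ≤ f) :
    let h : ℝ := (f + v) / 3
    deriv (fun h1 : ℝ => f * h1 / (h1 + h) + v * (h1 / (h1 + h)) ^ 2 - h1 ^ 2 / (h1 + h)) h = 0 ∧
    deriv (fun h2 : ℝ => f * h2 / (h + h2) + v * (h2 / (h + h2)) ^ 2 - h2 ^ 2 / (h + h2)) h = 0 := by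
  intro h
  have hh : 0 < h := by positivity
  have heq : h = (f + v) / 3 := rfl
  constructor
  · exact stmt_5_aux f v h hh heq
  · have : (fun h2 : ℝ => f * h2 / (h + h2) + v * (h2 / (h + h2)) ^ 2 - h2 ^ 2 / (h + h2))
        = (fun x : ℝ => f * x / (x + h) + v * (x / (x + h)) ^ 2 - x ^ 2 / (x + h)) := by
      funext x; rw [add_comm h x]
    rw [this]
    exact stmt_5_aux f v h hh heq
end

section
/- Consider N validators with positive stakes s_{j,0} and total S₀ = Σⱼ s_{j,0}. At each step t, a validator J_t is selected with P(J_t = j | F_{t−1}) = ω_{j,t−1} := s_{j,t−1}/S_{t−1}, independently of the reward R_t, and stakes update by s_{j,t} = s_{j,t−1} + R_t·1{J_t = j} − α·s_{j,t−1}/S_{t−1}^{1+γ}, so that S_t = S_{t−1} + R_t − α/S_{t−1}^γ. Then for each j, the stake-share process (ω_{j,t})_{t≥0} is a martingale with respect to the natural filtration. -/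
open MeasureTheory

/-- In the PBS stake model, each validator's stake share is a martingale. -/
theorem stmt_7 {Ω : Type*} {m0 : MeasurableSpace Ω} (μ : Measure Ω) [IsProbabilityMeasure μ]
    (ℱ : Filtration ℕ m0) (N : ℕ) (hN : 0 < N)
    (s : ℕ → Fin N → Ω → ℝ) (S : ℕ → Ω → ℝ) (R : ℕ → Ω → ℝ) (J : ℕ → Ω → Fin N)
    (Rmin S0 α γ : ℝ)
    (hRmin : 0 < Rmin) (hR : ∀ t ω, Rmin ≤ R (t + 1) ω)
    (hS0 : 0 < S0) (hα0 : 0 ≤ α) (hγ : 0 ≤ γ)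
    (hα : α < min (S0 ^ γ * Rmin) (min S0 Rmin))
    (hs0 : ∀ j ω, 0 < s 0 j ω) (hS0eq : ∀ ω, S 0 ω = S0)
    (hStot : ∀ t ω, S t ω = ∑ j, s t j ω)
    (hSpos : ∀ t ω, 0 < S t ω)
    (hupdate : ∀ t j ω, s (t + 1) j ω =
      s t j ω + (if J (t + 1) ω = j then R (t + 1) ω else 0)
        - α * s t j ω / (S t ω) ^ (1 + γ))
    (hadapted : ∀ j, Adapted ℱ (fun t => s t j))
    (hSadapted : Adapted ℱ S)
    (hint : ∀ t j, Integrable (fun ω => s t j ω / S t ω) μ)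
    -- conditional selection probability together with conditional independence
    -- of the selection event from the reward: for every bidder j,
    -- E[ (R_{t+1}/S_{t+1})·1{J_{t+1}=j} | ℱ_t ] = ω_{j,t} · E[ R_{t+1}/S_{t+1} | ℱ_t ].
    (hsel : ∀ t (j : Fin N),
      μ[fun ω => (R (t + 1) ω / S (t + 1) ω) * (if J (t + 1) ω = j then (1:ℝ) else 0) | ℱ t]
        =ᵐ[μ] fun ω => (s t j ω / S t ω) * (μ[fun ω' => R (t + 1) ω' / S (t + 1) ω' | ℱ t]) ω) :
    ∀ j : Fin N, Martingale (fun t ω => s t j ω / S t ω) ℱ μ := by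
  -- recursion for the total stake
  have hSrec : ∀ t ω, S (t+1) ω = S t ω + R (t+1) ω - α / (S t ω) ^ γ := by
    intro t ω
    have h1 : (0:ℝ) < S t ω := hSpos t ω
    have hγpos : (0:ℝ) < (S t ω) ^ γ := Real.rpow_pos_of_pos h1 γ
    have hpow : (S t ω) ^ (1+γ) = S t ω * (S t ω) ^ γ := by
      rw [Real.rpow_add h1, Real.rpow_one]
    rw [hStot (t+1) ω]
    simp only [hupdate]
    rw [Finset.sum_sub_distrib, Finset.sum_add_distrib, Finset.sum_ite_eq]
    simp only [Finset.mem_univ, if_true]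
    rw [← Finset.sum_div, ← Finset.mul_sum, ← hStot, hpow]
    field_simp
  have hS0γpos : (0:ℝ) < S0 ^ γ := Real.rpow_pos_of_pos hS0 γ
  have hαpow : α / S0 ^ γ < Rmin := by
    rw [div_lt_iff₀ hS0γpos]
    calc α < S0 ^ γ * Rmin := lt_of_lt_of_le hα (min_le_left _ _)
    _ = Rmin * S0 ^ γ := mul_comm _ _
  -- total stake is bounded below by S0
  have hSge : ∀ t ω, S0 ≤ S t ω := by
    intro t
    induction t with
    | zero => intro ω; rw [hS0eq]
    | succ t ih =>
      intro ω
      have h1 : (0:ℝ) < S t ω := hSpos t ω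
      have h2 : α / (S t ω) ^ γ ≤ α / S0 ^ γ :=
        div_le_div_of_nonneg_left hα0 hS0γpos
          (Real.rpow_le_rpow hS0.le (ih ω) hγ)
      have := hR t ω
      have := hSrec t ω
      linarith [ih ω]
  -- bound on the ratio X = R_{t+1} / S_{t+1}
  set c : ℝ := α / S0 ^ γ with hc
  have hc0 : 0 ≤ c := div_nonneg hα0 hS0γpos.le
  set K : ℝ := 1 + c / S0 with hK
  have hXnonneg : ∀ t ω, 0 ≤ R (t+1) ω / S (t+1) ω := fun t ω =>
    div_nonneg (le_trans hRmin.le (hR t ω)) (hSpos (t+1) ω).le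
  have hXle : ∀ t ω, R (t+1) ω / S (t+1) ω ≤ K := by
    intro t ω
    have h1 : (0:ℝ) < S t ω := hSpos t ω
    have h2 : (0:ℝ) < S (t+1) ω := hSpos (t+1) ω
    have h3 : α / (S t ω) ^ γ ≤ c :=
      div_le_div_of_nonneg_left hα0 hS0γpos
        (Real.rpow_le_rpow hS0.le (hSge t ω) hγ)
    have h4 : R (t+1) ω ≤ S (t+1) ω + c := by
      have := hSrec t ω; linarith
    rw [div_le_iff₀ h2]
    have h5 : (c / S0) * S0 ≤ (c / S0) * S (t+1) ω :=
      mul_le_mul_of_nonneg_left (hSge (t+1) ω) (div_nonneg hc0 hS0.le)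
    have h6 : (c / S0) * S0 = c := by field_simp
    calc R (t+1) ω ≤ S (t+1) ω + c := h4
      _ ≤ S (t+1) ω + (c / S0) * S (t+1) ω := by linarith
      _ = K * S (t+1) ω := by rw [hK]; ring
  have hXabs : ∀ t ω, ‖R (t+1) ω / S (t+1) ω‖ ≤ K := by
    intro t ω
    rw [Real.norm_eq_abs, abs_of_nonneg (hXnonneg t ω)]
    exact hXle t ω
  -- measurability facts
  have hSm : ∀ t, StronglyMeasurable[m0] (S t) := fun t => ((hSadapted t).mono (ℱ.le t) le_rfl).stronglyMeasurable
  have hsm : ∀ t j, StronglyMeasurable[m0] (fun ω => s t j ω) := fun t j =>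
    ((hadapted j t).mono (ℱ.le t) le_rfl).stronglyMeasurable
  have hRm : ∀ t, StronglyMeasurable[m0] (R (t+1)) := by
    intro t
    have : R (t+1) = fun ω => S (t+1) ω - S t ω + α / (S t ω) ^ γ := by
      funext ω; have := hSrec t ω; linarith
    rw [this]
    exact (((hSm (t+1)).measurable.sub (hSm t).measurable).add
      (measurable_const.div ((hSm t).measurable.pow measurable_const))).stronglyMeasurable
  intro j
  refine martingale_nat ?_ (fun t => hint t j) ?_
  · intro t
    exact ((hadapted j t).div (hSadapted t)).stronglyMeasurable
  intro t
  -- the key pointwise identity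
  set X : Ω → ℝ := fun ω => R (t+1) ω / S (t+1) ω with hX
  set Y : Ω → ℝ := fun ω => X ω * (if J (t+1) ω = j then (1:ℝ) else 0) with hY
  set f : Ω → ℝ := fun ω => s t j ω / S t ω with hf
  have hkey : (fun ω => s (t+1) j ω / S (t+1) ω)
      = fun ω => f ω + (Y ω - f ω * X ω) := by
    funext ω
    have h1 : (0:ℝ) < S t ω := hSpos t ω
    have h2 : (0:ℝ) < S (t+1) ω := hSpos (t+1) ω
    have hγpos : (0:ℝ) < (S t ω) ^ γ := Real.rpow_pos_of_pos h1 γ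
    have hpow : (S t ω) ^ (1+γ) = S t ω * (S t ω) ^ γ := by
      rw [Real.rpow_add h1, Real.rpow_one]
    have hrec := hSrec t ω
    have hnum : s (t+1) j ω = (s t j ω / S t ω) * S (t+1) ω
        + ((if J (t+1) ω = j then R (t+1) ω else 0) - (s t j ω / S t ω) * R (t+1) ω) := by
      rw [hupdate, hpow, hrec]
      by_cases hJ : J (t+1) ω = j <;>
        simp only [hJ, if_true, if_false] <;> field_simp <;> ring
    simp only [hY, hX, hf]
    rw [hnum]
    by_cases hJ : J (t+1) ω = j <;>
      simp only [hJ, if_true, if_false, mul_one, mul_zero, add_zero] <;> field_simp <;> ring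
  -- integrability
  have hXmeas : AEStronglyMeasurable X μ :=
    ((hRm t).measurable.div (hSm (t+1)).measurable).aestronglyMeasurable
  have hXint : Integrable X μ :=
    ⟨hXmeas, HasFiniteIntegral.of_bounded (ae_of_all μ (hXabs t))⟩
  have hYeq : Y = fun ω =>
      (s (t+1) j ω - s t j ω + α * s t j ω / (S t ω) ^ (1+γ)) / S (t+1) ω := by
    funext ω
    have := hupdate t j ω
    simp only [hY, hX]
    by_cases hJ : J (t+1) ω = j
    · simp only [hJ, if_true, mul_one] at this ⊢
      rw [this]; ring
    · simp only [hJ, if_false, mul_zero] at this ⊢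
      rw [this]; ring
  have hYmeas : AEStronglyMeasurable Y μ := by
    rw [hYeq]
    exact ((((hsm (t+1) j).measurable.sub (hsm t j).measurable).add
      ((measurable_const.mul (hsm t j).measurable).div
        ((hSm t).measurable.pow measurable_const))).div
      (hSm (t+1)).measurable).aestronglyMeasurable
  have hYabs : ∀ ω, ‖Y ω‖ ≤ K := by
    intro ω
    simp only [hY]
    by_cases hJ : J (t+1) ω = j
    · simp only [hJ, if_true, mul_one]; exact hXabs t ω
    · simp only [hJ, if_false, mul_zero, norm_zero]
      rw [hK]
      positivity
  have hYint : Integrable Y μ :=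
    ⟨hYmeas, HasFiniteIntegral.of_bounded (ae_of_all μ hYabs)⟩
  have hWint : Integrable (fun ω => f ω * X ω) μ := by
    have := (hint t j).bdd_mul hXmeas (c := K) (ae_of_all μ (hXabs t))
    simpa [mul_comm] using this
  have hfmeas : StronglyMeasurable[ℱ t] f :=
    ((hadapted j t).div (hSadapted t)).stronglyMeasurable
  -- the conditional expectation computation
  have hsub : Integrable (fun ω => Y ω - f ω * X ω) μ := hYint.sub hWint
  have step1 : μ[fun ω => s (t+1) j ω / S (t+1) ω | ℱ t]
      =ᵐ[μ] μ[f | ℱ t] + μ[fun ω => Y ω - f ω * X ω | ℱ t] := by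
    rw [hkey]
    exact condExp_add (hint t j) hsub (ℱ t)
  have step2 : μ[f | ℱ t] = f := condExp_of_stronglyMeasurable (ℱ.le t) hfmeas (hint t j)
  have step3 : μ[fun ω => Y ω - f ω * X ω | ℱ t]
      =ᵐ[μ] μ[Y | ℱ t] - μ[fun ω => f ω * X ω | ℱ t] := condExp_sub hYint hWint (ℱ t)
  have step4 : μ[fun ω => f ω * X ω | ℱ t] =ᵐ[μ] fun ω => f ω * (μ[X | ℱ t]) ω := by
    have := condExp_mul_of_stronglyMeasurable_left hfmeas (by simpa [Pi.mul_def] using hWint) hXint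
    simpa [Pi.mul_def] using this
  have step5 : μ[Y | ℱ t] =ᵐ[μ] fun ω => f ω * (μ[X | ℱ t]) ω := hsel t j
  refine Filter.EventuallyEq.symm ?_
  calc μ[fun ω => s (t+1) j ω / S (t+1) ω | ℱ t]
      =ᵐ[μ] μ[f | ℱ t] + μ[fun ω => Y ω - f ω * X ω | ℱ t] := step1
    _ =ᵐ[μ] f + 0 := by
        rw [step2]
        refine Filter.EventuallyEq.add (Filter.EventuallyEq.refl _ _) ?_
        calc μ[fun ω => Y ω - f ω * X ω | ℱ t]
            =ᵐ[μ] μ[Y | ℱ t] - μ[fun ω => f ω * X ω | ℱ t] := step3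
          _ =ᵐ[μ] 0 := by
              filter_upwards [step4, step5] with ω h4 h5
              simp [Pi.sub_apply, h4, h5]
    _ =ᵐ[μ] f := by rw [add_zero]
end

section
/- With γ = 0, the unconditional variance of validator j's share satisfies Var(ω_{j,t}) = a_t·ω_{j,0}(1 − ω_{j,0}) for all t ≥ 1, where a_1 = z_1, a_{t+1} = a_t + z_{t+1}(1 − a_t), and z_{t+1} = E[(R_{t+1}/S_{t+1})²]. -/
/-!
For a square-integrable martingale the increments are orthogonal to the past, so second moments
add up: `E[W_{t+1}²] = E[W_t²] + E[(W_{t+1} - W_t)²]`. Integrating the conditional variance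
`W_t (1 - W_t) z_{t+1}` of the increment and using that the mean stays `ω₀` turns this into
the affine recursion `v_{t+1} = v_t + z_{t+1} (ω₀(1 - ω₀) - v_t)` for `v_t = Var(W_t)`, which
starts at `v_0 = 0` and is solved by `v_t = a_t ω₀(1 - ω₀)`.
-/

open MeasureTheory

namespace MeasureTheory.Martingale

variable {Ω ι : Type*} [Preorder ι] {m0 : MeasurableSpace Ω} {μ : Measure Ω} [IsFiniteMeasure μ]
  {ℱ : Filtration ι m0} {f : ι → Ω → ℝ}

theorem integral_eq (hf : Martingale f ℱ μ) {i j : ι} (hij : i ≤ j) :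
    ∫ ω, f i ω ∂μ = ∫ ω, f j ω ∂μ := by
  simpa using hf.setIntegral_eq hij MeasurableSet.univ

theorem integral_mul_eq_integral_sq (hf : Martingale f ℱ μ) (hL2 : ∀ i, MemLp (f i) 2 μ)
    {i j : ι} (hij : i ≤ j) : ∫ ω, f i ω * f j ω ∂μ = ∫ ω, f i ω ^ 2 ∂μ := by
  have hpull : μ[f i * f j | ℱ i] =ᵐ[μ] f i * f i :=
    (condExp_mul_of_stronglyMeasurable_left (hf.stronglyAdapted i)
      ((hL2 i).integrable_mul (hL2 j)) (hf.integrable j)).trans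
      ((hf.condExp_ae_eq hij).mono fun ω h => by simp [h])
  calc ∫ ω, f i ω * f j ω ∂μ = ∫ ω, (μ[f i * f j | ℱ i]) ω ∂μ :=
        (integral_condExp (ℱ.le i)).symm
    _ = ∫ ω, f i ω ^ 2 ∂μ := integral_congr_ae (hpull.mono fun ω h => by simp [h, sq])

theorem integral_sub_sq (hf : Martingale f ℱ μ) (hL2 : ∀ i, MemLp (f i) 2 μ)
    {i j : ι} (hij : i ≤ j) :
    ∫ ω, (f j ω - f i ω) ^ 2 ∂μ = ∫ ω, f j ω ^ 2 ∂μ - ∫ ω, f i ω ^ 2 ∂μ := by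
  have hcross : Integrable (fun ω => 2 * (f i ω * f j ω)) μ :=
    ((hL2 i).integrable_mul (hL2 j)).const_mul 2
  calc ∫ ω, (f j ω - f i ω) ^ 2 ∂μ
      = ∫ ω, (f j ω ^ 2 - 2 * (f i ω * f j ω) + f i ω ^ 2) ∂μ := by
        congr 1; funext ω; ring
    _ = ∫ ω, f j ω ^ 2 ∂μ - 2 * ∫ ω, f i ω * f j ω ∂μ + ∫ ω, f i ω ^ 2 ∂μ := by
        rw [integral_add, integral_sub, integral_const_mul]
        exacts [(hL2 j).integrable_sq, hcross, (hL2 j).integrable_sq.sub hcross,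
          (hL2 i).integrable_sq]
    _ = ∫ ω, f j ω ^ 2 ∂μ - ∫ ω, f i ω ^ 2 ∂μ := by
        rw [hf.integral_mul_eq_integral_sq hL2 hij]; ring

end MeasureTheory.Martingale

theorem eq_mul_of_affine_recursion {v z a : ℕ → ℝ} {c : ℝ} (hv0 : v 0 = 0)
    (hv : ∀ t, v (t + 1) = v t + z (t + 1) * (c - v t)) (ha1 : a 1 = z 1)
    (ha : ∀ t, 1 ≤ t → a (t + 1) = a t + z (t + 1) * (1 - a t)) :
    ∀ t, 1 ≤ t → v t = a t * c := by
  intro t ht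
  induction t, ht using Nat.le_induction with
  | base => rw [hv 0, hv0, ha1]; ring
  | succ t ht ih => rw [hv t, ha t ht, ih]; ring

theorem stmt_11_general {Ω : Type*} {m0 : MeasurableSpace Ω} (μ : Measure Ω) [IsProbabilityMeasure μ]
    (ℱ : Filtration ℕ m0) (W : ℕ → Ω → ℝ) (ω0 : ℝ) (z a : ℕ → ℝ)
    (hmart : Martingale W ℱ μ)
    (hinit : ∀ ω, W 0 ω = ω0)
    -- conditional variance identity from the one-step lemma; with γ = 0 the
    -- conditional expectation of (R_{t+1}/S_{t+1})² is the constant z_{t+1}: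
    (hcondvar : ∀ t : ℕ,
      μ[fun ω => (W (t + 1) ω - W t ω) ^ 2 | ℱ t]
        =ᵐ[μ] fun ω => W t ω * (1 - W t ω) * z (t + 1))
    (hsq : ∀ t, Integrable (fun ω => (W t ω) ^ 2) μ)
    (ha1 : a 1 = z 1) (ha : ∀ t : ℕ, 1 ≤ t → a (t + 1) = a t + z (t + 1) * (1 - a t)) :
    ∀ t : ℕ, 1 ≤ t →
      (∫ ω, (W t ω) ^ 2 ∂μ) - (∫ ω, W t ω ∂μ) ^ 2 = a t * (ω0 * (1 - ω0)) := by
  have hmean (t : ℕ) : ∫ ω, W t ω ∂μ = ω0 := by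
    rw [← hmart.integral_eq (Nat.zero_le t)]; simp [hinit]
  have hL2 (t : ℕ) : MemLp (W t) 2 μ :=
    (memLp_two_iff_integrable_sq (hmart.integrable t).1).2 (hsq t)
  have hincr (t : ℕ) :
      ∫ ω, (W (t + 1) ω - W t ω) ^ 2 ∂μ = z (t + 1) * (ω0 - ∫ ω, W t ω ^ 2 ∂μ) := by
    rw [← integral_condExp (ℱ.le t), integral_congr_ae (hcondvar t), integral_mul_const,
      ← hmean t, ← integral_sub (hmart.integrable t) (hsq t)]
    simp only [mul_one_sub, sq, mul_comm]
  have hstep (t : ℕ) : ∫ ω, W (t + 1) ω ^ 2 ∂μ - ω0 ^ 2 = (∫ ω, W t ω ^ 2 ∂μ - ω0 ^ 2)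
      + z (t + 1) * (ω0 * (1 - ω0) - (∫ ω, W t ω ^ 2 ∂μ - ω0 ^ 2)) := by
    linear_combination (hmart.integral_sub_sq hL2 (Nat.le_succ t)).symm.trans (hincr t)
  intro t ht
  rw [hmean t]
  exact eq_mul_of_affine_recursion (v := fun t => ∫ ω, W t ω ^ 2 ∂μ - ω0 ^ 2)
    (by simp [hinit]) hstep ha1 ha t ht

/-- Unconditional variance of validator j's share (γ = 0):
Var(ω_{j,t}) = aₜ·ω_{j,0}(1 − ω_{j,0}) with a₁ = z₁, a_{t+1} = aₜ + z_{t+1}(1 − aₜ). -/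
theorem stmt_11 {Ω : Type*} {m0 : MeasurableSpace Ω} (μ : Measure Ω) [IsProbabilityMeasure μ]
    (ℱ : Filtration ℕ m0) (W : ℕ → Ω → ℝ) (R S : ℕ → Ω → ℝ) (ω0 : ℝ) (z a : ℕ → ℝ)
    (hmart : Martingale W ℱ μ)
    (hbdd : ∀ t ω, W t ω ∈ Set.Icc (0:ℝ) 1)
    (hinit : ∀ ω, W 0 ω = ω0)
    (hz : ∀ t : ℕ, z (t + 1) = ∫ ω, (R (t + 1) ω / S (t + 1) ω) ^ 2 ∂μ)
    -- conditional variance identity from the one-step lemma; with γ = 0 the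
    -- conditional expectation of (R_{t+1}/S_{t+1})² is the constant z_{t+1}:
    (hcondvar : ∀ t : ℕ,
      μ[fun ω => (W (t + 1) ω - W t ω) ^ 2 | ℱ t]
        =ᵐ[μ] fun ω => W t ω * (1 - W t ω) * z (t + 1))
    (hsq : ∀ t, Integrable (fun ω => (W t ω) ^ 2) μ)
    (ha1 : a 1 = z 1) (ha : ∀ t : ℕ, 1 ≤ t → a (t + 1) = a t + z (t + 1) * (1 - a t)) :
    ∀ t : ℕ, 1 ≤ t →
      (∫ ω, (W t ω) ^ 2 ∂μ) - (∫ ω, W t ω ∂μ) ^ 2 = a t * (ω0 * (1 - ω0)) :=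
  stmt_11_general μ ℱ W ω0 z a hmart hinit hcondvar hsq ha1 ha
end

section
/- Let f̄₁, f̄₂, v̄₁, v̄₂ > 0. The pair (h₁, h₂) with h₁, h₂ > 0 satisfies the two first-order conditions of the two-builder game if and only if, writing λ = h₂/h₁, λ is a positive root of P(λ) = f̄₁λ⁴ + (3f̄₁ + 2v̄₁)λ³ + (2f̄₁ − 2f̄₂ + 4v̄₁ − 4v̄₂)λ² − (3f̄₂ + 2v̄₂)λ − f̄₂ and h₁ = λ(f̄₁λ + f̄₁ + 2v̄₁)/((1+2λ)(1+λ)). -/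
/-- Equivalence between the two-builder first-order conditions and the quartic
equation in λ = h₂/h₁ together with the closed-form expression for h₁. -/
theorem stmt_15 (f1 f2 v1 v2 h1 h2 : ℝ)
    (hf1 : 0 < f1) (hf2 : 0 < f2) (hv1 : 0 < v1) (hv2 : 0 < v2)
    (hh1 : 0 < h1) (hh2 : 0 < h2) :
    ((-f1 * h1 * (h1 + h2) + f1 * (h1 + h2) ^ 2 + 2 * v1 * h1 * (h1 + h2) - 2 * h1 ^ 2 * v1
        - 2 * h1 * (h1 + h2) ^ 2 + h1 ^ 2 * (h1 + h2) = 0) ∧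
     (-f2 * h2 * (h1 + h2) + f2 * (h1 + h2) ^ 2 + 2 * v2 * h2 * (h1 + h2) - 2 * h2 ^ 2 * v2
        - 2 * h2 * (h1 + h2) ^ 2 + h2 ^ 2 * (h1 + h2) = 0)) ↔
    (let lam := h2 / h1
     (f1 * lam ^ 4 + (3 * f1 + 2 * v1) * lam ^ 3
        + (2 * f1 - 2 * f2 + 4 * v1 - 4 * v2) * lam ^ 2 - (3 * f2 + 2 * v2) * lam - f2 = 0) ∧
     h1 = lam * (f1 * lam + f1 + 2 * v1) / ((1 + 2 * lam) * (1 + lam))) := by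
  have hh1' : h1 ≠ 0 := hh1.ne'
  set lam := h2 / h1 with hlamdef
  have hlampos : 0 < lam := div_pos hh2 hh1
  have hlam : h2 = lam * h1 := by rw [hlamdef]; field_simp
  have hd : (0:ℝ) < (1 + 2 * lam) * (1 + lam) := by positivity
  have hsq : (h1:ℝ)^2 ≠ 0 := pow_ne_zero 2 hh1'
  constructor
  · rintro ⟨e1, e2⟩
    rw [hlam] at e1 e2
    have hA1 : f1 * lam * (1 + lam) + 2 * v1 * lam - h1 * (1 + lam) * (1 + 2 * lam) = 0 := by
      have h : h1 ^ 2 * (f1 * lam * (1 + lam) + 2 * v1 * lam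
          - h1 * (1 + lam) * (1 + 2 * lam)) = 0 := by linear_combination e1
      exact (mul_eq_zero.mp h).resolve_left hsq
    have hA2 : f2 * (1 + lam) + 2 * v2 * lam - h1 * lam * (1 + lam) * (2 + lam) = 0 := by
      have h : h1 ^ 2 * (f2 * (1 + lam) + 2 * v2 * lam
          - h1 * lam * (1 + lam) * (2 + lam)) = 0 := by linear_combination e2
      exact (mul_eq_zero.mp h).resolve_left hsq
    refine ⟨?_, ?_⟩
    · linear_combination (lam * (2 + lam)) * hA1 - (1 + 2 * lam) * hA2
    · rw [eq_div_iff hd.ne']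
      linear_combination -hA1
  · intro h
    obtain ⟨hP, hH⟩ : (f1 * lam ^ 4 + (3 * f1 + 2 * v1) * lam ^ 3
        + (2 * f1 - 2 * f2 + 4 * v1 - 4 * v2) * lam ^ 2 - (3 * f2 + 2 * v2) * lam - f2 = 0) ∧
        h1 = lam * (f1 * lam + f1 + 2 * v1) / ((1 + 2 * lam) * (1 + lam)) := h
    rw [eq_div_iff hd.ne'] at hH
    have hA1 : f1 * lam * (1 + lam) + 2 * v1 * lam - h1 * (1 + lam) * (1 + 2 * lam) = 0 := by
      linear_combination -hH
    have hA2 : f2 * (1 + lam) + 2 * v2 * lam - h1 * lam * (1 + lam) * (2 + lam) = 0 := by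
      have h2lam : (1 + 2 * lam) ≠ 0 := by positivity
      have : (1 + 2 * lam) * (f2 * (1 + lam) + 2 * v2 * lam
          - h1 * lam * (1 + lam) * (2 + lam)) = 0 := by
        linear_combination (lam * (2 + lam)) * hA1 - hP
      exact (mul_eq_zero.mp this).resolve_left h2lam
    rw [hlam]
    constructor
    · linear_combination h1 ^ 2 * hA1
    · linear_combination h1 ^ 2 * hA2
end

section
/- Let k₁ ∈ (0,1], k₂ > 1, f̄₂ > 0, and suppose λ₄ is the unique positive root of P(λ; k₁, k₂) = f̄₂[k₂λ⁴ + (3k₂+2k₁k₂)λ³ + (2k₂−2+4k₁k₂−4k₁)λ² − (3+2k₁)λ − 1]. Then λ₄ > 1/k₂. Consequently, for two builders with v̄₁/f̄₁ = v̄₂/f̄₂ = k₁ and f̄₁/f̄₂ = k₂ > 1, the equilibrium ratio satisfies h₁*/h₂* = 1/λ₄ < k₂. -/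
/-!
On the positive axis the quartic is negative at `1/k₂` (there it equals
`(k₂ - 1)(2k₁k₂ - (1 + k₂)²)/k₂³`, and `2k₁k₂ ≤ 2k₂ < (1 + k₂)²`) and positive at `1`
(there it equals `6(k₁ + 1)(k₂ - 1)`). By the intermediate value theorem it has a root
strictly between `1/k₂` and `1`, which by uniqueness is `λ₄`.
-/

open Set

/-- The quartic `P(λ; k₁, k₂)` of the equilibrium condition is `f̄₂ * equilibriumQuartic k₁ k₂ λ`. -/
def equilibriumQuartic (k1 k2 x : ℝ) : ℝ :=
  k2 * x ^ 4 + (3 * k2 + 2 * k1 * k2) * x ^ 3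
    + (2 * k2 - 2 + 4 * k1 * k2 - 4 * k1) * x ^ 2 - (3 + 2 * k1) * x - 1

namespace equilibriumQuartic

variable {k1 k2 : ℝ}

theorem continuous (k1 k2 : ℝ) : Continuous (equilibriumQuartic k1 k2) := by
  unfold equilibriumQuartic
  fun_prop

theorem apply_one (k1 k2 : ℝ) : equilibriumQuartic k1 k2 1 = 6 * (k1 + 1) * (k2 - 1) := by
  unfold equilibriumQuartic
  ring

theorem apply_one_div (k1 : ℝ) (hk2 : k2 ≠ 0) :
    equilibriumQuartic k1 k2 (1 / k2) = (k2 - 1) * (2 * k1 * k2 - (1 + k2) ^ 2) / k2 ^ 3 := by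
  unfold equilibriumQuartic
  field_simp
  ring

theorem apply_one_div_neg (hk1 : k1 ≤ 1) (hk2 : 1 < k2) : equilibriumQuartic k1 k2 (1 / k2) < 0 := by
  have hk2pos : 0 < k2 := by linarith
  rw [apply_one_div k1 hk2pos.ne']
  have hcross : 2 * k1 * k2 - (1 + k2) ^ 2 < 0 := by nlinarith
  exact div_neg_of_neg_of_pos (mul_neg_of_pos_of_neg (by linarith) hcross) (by positivity)

theorem apply_one_pos (hk1 : -1 < k1) (hk2 : 1 < k2) : 0 < equilibriumQuartic k1 k2 1 := by
  rw [apply_one]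
  have : 0 < k1 + 1 := by linarith
  have : 0 < k2 - 1 := by linarith
  positivity

theorem exists_root_mem_Ioo (hk1 : k1 ∈ Ioc (-1) 1) (hk2 : 1 < k2) :
    ∃ x ∈ Ioo (1 / k2) 1, equilibriumQuartic k1 k2 x = 0 := by
  have hle : 1 / k2 ≤ 1 := by
    rw [div_le_one (by linarith)]
    exact hk2.le
  exact intermediate_value_Ioo hle (continuous k1 k2).continuousOn
    ⟨apply_one_div_neg hk1.2 hk2, apply_one_pos hk1.1 hk2⟩

end equilibriumQuartic

theorem stmt_18_general (k1 k2 f2 lam4 h1 h2 : ℝ)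
    (hk1 : k1 ∈ Set.Ioc (0:ℝ) 1) (hk2 : 1 < k2)
    (huniq : ∀ x : ℝ, 0 < x →
      f2 * (k2 * x ^ 4 + (3 * k2 + 2 * k1 * k2) * x ^ 3
        + (2 * k2 - 2 + 4 * k1 * k2 - 4 * k1) * x ^ 2 - (3 + 2 * k1) * x - 1) = 0 → x = lam4)
    (hh1 : 0 < h1) (hh2 : h2 = lam4 * h1) :
    1 / k2 < lam4 ∧ h1 / h2 = 1 / lam4 ∧ h1 / h2 < k2 := by
  have hk2pos : 0 < k2 := by linarith
  obtain ⟨x, ⟨hx, -⟩, hroot⟩ :=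
    equilibriumQuartic.exists_root_mem_Ioo ⟨by linarith [hk1.1], hk1.2⟩ hk2
  have hlam : 1 / k2 < lam4 := by
    have hxpos : 0 < x := (one_div_pos.mpr hk2pos).trans hx
    have : f2 * equilibriumQuartic k1 k2 x = 0 := by rw [hroot, mul_zero]
    exact huniq x hxpos this ▸ hx
  have hlampos : 0 < lam4 := (one_div_pos.mpr hk2pos).trans hlam
  have hratio : h1 / h2 = 1 / lam4 := by
    rw [hh2]
    field_simp
  exact ⟨hlam, hratio, hratio ▸ (one_div_lt hk2pos hlampos).mp hlam⟩

/-- If k₂ > 1, the unique positive root λ₄ of the quartic exceeds 1/k₂, so the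
equilibrium ratio satisfies h₁*/h₂* = 1/λ₄ < k₂. -/
theorem stmt_18 (k1 k2 f2 lam4 h1 h2 : ℝ)
    (hk1 : k1 ∈ Set.Ioc (0:ℝ) 1) (hk2 : 1 < k2) (hf2 : 0 < f2)
    (hlam_pos : 0 < lam4)
    (hroot : f2 * (k2 * lam4 ^ 4 + (3 * k2 + 2 * k1 * k2) * lam4 ^ 3
      + (2 * k2 - 2 + 4 * k1 * k2 - 4 * k1) * lam4 ^ 2 - (3 + 2 * k1) * lam4 - 1) = 0)
    (huniq : ∀ x : ℝ, 0 < x →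
      f2 * (k2 * x ^ 4 + (3 * k2 + 2 * k1 * k2) * x ^ 3
        + (2 * k2 - 2 + 4 * k1 * k2 - 4 * k1) * x ^ 2 - (3 + 2 * k1) * x - 1) = 0 → x = lam4)
    (hh1 : 0 < h1) (hh2 : h2 = lam4 * h1) :
    1 / k2 < lam4 ∧ h1 / h2 = 1 / lam4 ∧ h1 / h2 < k2 :=
  stmt_18_general k1 k2 f2 lam4 h1 h2 hk1 hk2 huniq hh1 hh2
end
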